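/- Let (V, g, T) be a 2n-dimensional para-Hermitian vector space, A a g-symmetric endomorphism commuting with T, and define p(t) := det(A − t·id) for t ∈ ℝ. Then there exists a polynomial q of degree n with real coefficients and leading coefficient (−1)ⁿ such that p(t) = q(t)² for all t; in particular det(A − t·id) ≥ 0 for every real t. -/

import Mathlib

open Module Polynomial

/-!
The involution `T` splits `V = V⁺ ⊕ V⁻` into its `±1`-eigenspaces, both preserved by
`A`, so `χ_A = χ_{A⁺} · χ_{A⁻}`. Compatibility `g (T x) (T y) = - g x y` makes `V⁻`
isotropic, so by nondegeneracy `g` pairs `V⁻` perfectly with `V⁺`, and `g`-symmetry of `A`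
makes `A⁻` the transpose of `A⁺` under this pairing; hence `χ_A = χ_{A⁺}²`. Since `dim V`
is even, `det (A - t) = χ_A(t)`, and `q = (-1)ⁿ χ_{A⁺}` works.
-/

namespace LinearMap

section CommRing

variable {R M : Type*} [CommRing R] [AddCommGroup M] [Module R M] [Module.Free R M]
  [Module.Finite R M]

theorem charpoly_dualMap (f : M →ₗ[R] M) : f.dualMap.charpoly = f.charpoly := by
  let b := Module.Free.chooseBasis R M
  rw [← charpoly_toMatrix f b, ← charpoly_toMatrix f.dualMap b.dualBasis, dualMap_def,
    toMatrix_transpose, Matrix.charpoly_transpose]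

theorem det_sub_smul_id (f : M →ₗ[R] M) (t : R) :
    LinearMap.det (f - t • id) = (-1) ^ finrank R M * f.charpoly.eval t := by
  rw [eval_charpoly, Module.algebraMap_end_eq_smul_id, ← det_smul, neg_one_smul, neg_sub]

end CommRing

theorem isCompl_ker_sub_id_ker_add_id {R M : Type*} [Ring R] [Invertible (2 : R)]
    [AddCommGroup M] [Module R M] {T : M →ₗ[R] M} (hT : T ∘ₗ T = id) :
    IsCompl (ker (T - id)) (ker (T + id)) := by
  have hTT (x : M) : T (T x) = x := congr($hT x)
  constructor
  · rw [Submodule.disjoint_def]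
    intro x hp hm
    rw [mem_ker, sub_apply, id_apply, sub_eq_zero] at hp
    rw [mem_ker, add_apply, id_apply, hp] at hm
    rw [← one_smul R x, ← invOf_mul_self (2 : R), mul_smul, two_smul, hm, smul_zero]
  · rw [codisjoint_iff, eq_top_iff]
    intro x _
    have hx : x = (⅟2 : R) • (x + T x) + (⅟2 : R) • (x - T x) := by
      rw [← smul_add, add_add_sub_cancel, ← two_smul R, smul_smul, invOf_mul_self, one_smul]
    rw [hx]
    exact Submodule.add_mem_sup (by simp [hTT, add_comm]) (by simp [hTT])

theorem apply_mem_ker_of_comp_eq {R M : Type*} [Semiring R] [AddCommMonoid M] [Module R M]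
    {A S : M →ₗ[R] M} (h : A ∘ₗ S = S ∘ₗ A) {x : M} (hx : x ∈ ker S) : A x ∈ ker S := by
  rw [mem_ker] at hx ⊢
  rw [← comp_apply, ← h, comp_apply, hx, map_zero]

section Field

variable {K : Type*} [Field K]

theorem charpoly_eq_mul_of_isCompl {V : Type*} [AddCommGroup V] [Module K V]
    [FiniteDimensional K V] {p q : Submodule K V} (hpq : IsCompl p q) {f : V →ₗ[K] V}
    (hp : ∀ x ∈ p, f x ∈ p) (hq : ∀ x ∈ q, f x ∈ q) :
    f.charpoly = (f.restrict hp).charpoly * (f.restrict hq).charpoly := by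
  let e := Submodule.prodEquivOfIsCompl p q hpq
  have he : e.conj ((f.restrict hp).prodMap (f.restrict hq)) = f := by
    ext x
    obtain ⟨⟨a, b⟩, rfl⟩ := e.surjective x
    simp [e, LinearEquiv.conj_apply]
  conv_lhs => rw [← he]
  rw [LinearEquiv.charpoly_conj, charpoly_prodMap]

theorem charpoly_eq_of_adjoint_of_injective {M₁ M₂ : Type*} [AddCommGroup M₁] [Module K M₁]
    [FiniteDimensional K M₁] [AddCommGroup M₂] [Module K M₂] [FiniteDimensional K M₂]
    {B : M₁ →ₗ[K] M₂ →ₗ[K] K} (hB : Function.Injective B) (hdim : finrank K M₁ = finrank K M₂)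
    {f₁ : M₁ →ₗ[K] M₁} {f₂ : M₂ →ₗ[K] M₂} (hf : ∀ x y, B (f₁ x) y = B x (f₂ y)) :
    f₁.charpoly = f₂.charpoly := by
  have hdim' : finrank K M₁ = finrank K (Dual K M₂) := by rw [Subspace.dual_finrank_eq, hdim]
  let e := LinearEquiv.ofBijective B
    ⟨hB, (injective_iff_surjective_of_finrank_eq_finrank hdim').1 hB⟩
  have he : e.conj f₁ = f₂.dualMap := by
    rw [LinearEquiv.conj_apply, LinearEquiv.comp_toLinearMap_symm_eq]
    ext x y
    exact hf x y
  rw [← charpoly_dualMap f₂, ← he, LinearEquiv.charpoly_conj]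

end Field

end LinearMap

namespace ParaHermitian

open LinearMap (ker)

variable {K V : Type*} [Field K] [Invertible (2 : K)] [AddCommGroup V] [Module K V]
  {g : V →ₗ[K] V →ₗ[K] K} {T : V →ₗ[K] V}

theorem apply_eq_zero_of_mem_ker_add_id (hcompat : ∀ x y, g (T x) (T y) = - g x y) {x y : V}
    (hx : x ∈ ker (T + LinearMap.id)) (hy : y ∈ ker (T + LinearMap.id)) : g x y = 0 := by
  have h := hcompat x y
  rw [eq_neg_of_add_eq_zero_left hx, eq_neg_of_add_eq_zero_left hy, map_neg, map_neg,
    LinearMap.neg_apply, neg_neg] at h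
  have h2 : (2 : K) * g x y = 0 := by linear_combination h
  simpa only [invOf_mul_cancel_left, mul_zero] using congr(⅟2 * $h2)

theorem injective_domRestrict₁₂ (hT : T ∘ₗ T = LinearMap.id)
    (hcompat : ∀ x y, g (T x) (T y) = - g x y) (hnd : ∀ x, (∀ y, g x y = 0) → x = 0) :
    Function.Injective (g.domRestrict₁₂ (ker (T + LinearMap.id)) (ker (T - LinearMap.id))) := by
  rw [injective_iff_map_eq_zero]
  intro y hy
  refine Subtype.ext (hnd y fun z ↦ ?_)
  have hz : z ∈ ker (T - LinearMap.id) ⊔ ker (T + LinearMap.id) := by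
    rw [(LinearMap.isCompl_ker_sub_id_ker_add_id hT).sup_eq_top]
    trivial
  obtain ⟨a, ha, b, hb, rfl⟩ := Submodule.mem_sup.1 hz
  rw [map_add, apply_eq_zero_of_mem_ker_add_id hcompat y.2 hb, add_zero]
  exact congr($hy ⟨a, ha⟩)

end ParaHermitian

theorem stmt18_general {V : Type*} [AddCommGroup V] [Module ℝ V] [FiniteDimensional ℝ V]
    (n : ℕ) (hV : finrank ℝ V = 2 * n)
    (g : V →ₗ[ℝ] V →ₗ[ℝ] ℝ)
    (hnd : ∀ x, (∀ y, g x y = 0) → x = 0)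
    (T : V →ₗ[ℝ] V) (hT : T ∘ₗ T = LinearMap.id)
    (hplus : finrank ℝ (LinearMap.ker (T - LinearMap.id)) = n)
    (hminus : finrank ℝ (LinearMap.ker (T + LinearMap.id)) = n)
    (hcompat : ∀ x y, g (T x) (T y) = - g x y)
    (A : V →ₗ[ℝ] V)
    (hAT : A ∘ₗ T = T ∘ₗ A)
    (hAsym : ∀ x y, g (A x) y = g x (A y)) :
    (∃ q : Polynomial ℝ, q.natDegree = n ∧ q.leadingCoeff = (-1 : ℝ) ^ n ∧
      ∀ t : ℝ, LinearMap.det (A - t • LinearMap.id) = (q.eval t) ^ 2) ∧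
    ∀ t : ℝ, 0 ≤ LinearMap.det (A - t • LinearMap.id) := by
  have hAp : ∀ x ∈ LinearMap.ker (T - LinearMap.id), A x ∈ LinearMap.ker (T - LinearMap.id) :=
    fun _ ↦ LinearMap.apply_mem_ker_of_comp_eq <| by
      rw [LinearMap.comp_sub, LinearMap.sub_comp, hAT, LinearMap.comp_id, LinearMap.id_comp]
  have hAm : ∀ x ∈ LinearMap.ker (T + LinearMap.id), A x ∈ LinearMap.ker (T + LinearMap.id) :=
    fun _ ↦ LinearMap.apply_mem_ker_of_comp_eq <| by
      rw [LinearMap.comp_add, LinearMap.add_comp, hAT, LinearMap.comp_id, LinearMap.id_comp]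
  have hcharpoly : A.charpoly = (A.restrict hAp).charpoly ^ 2 := by
    rw [LinearMap.charpoly_eq_mul_of_isCompl (LinearMap.isCompl_ker_sub_id_ker_add_id hT) hAp hAm,
      sq, LinearMap.charpoly_eq_of_adjoint_of_injective
        (ParaHermitian.injective_domRestrict₁₂ hT hcompat hnd) (hminus.trans hplus.symm)
        (f₂ := A.restrict hAp) fun y x ↦ hAsym y x]
  set q : ℝ[X] := C ((-1) ^ n) * (A.restrict hAp).charpoly
  have hdet (t : ℝ) : LinearMap.det (A - t • LinearMap.id) = q.eval t ^ 2 := by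
    rw [LinearMap.det_sub_smul_id, hV, hcharpoly, eval_mul, eval_C, eval_pow, mul_pow,
      ← pow_mul, mul_comm 2 n]
  refine ⟨⟨q, ?_, ?_, hdet⟩, fun t ↦ hdet t ▸ sq_nonneg _⟩
  · rw [natDegree_C_mul (by simp), LinearMap.charpoly_natDegree, hplus]
  · rw [leadingCoeff_mul, leadingCoeff_C, (LinearMap.charpoly_monic _).leadingCoeff, mul_one]

/-- For a `g`-symmetric endomorphism `A` commuting with `T` on a
`2n`-dimensional para-Hermitian space, `det(A − t·id)` is the square of a real
polynomial of degree `n` with leading coefficient `(−1)ⁿ`; in particular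
`det(A − t·id) ≥ 0` for all real `t`. -/
theorem stmt18 {V : Type*} [AddCommGroup V] [Module ℝ V] [FiniteDimensional ℝ V]
    (n : ℕ) (hV : finrank ℝ V = 2 * n)
    (g : V →ₗ[ℝ] V →ₗ[ℝ] ℝ)
    (hsymm : ∀ x y, g x y = g y x)
    (hnd : ∀ x, (∀ y, g x y = 0) → x = 0)
    (T : V →ₗ[ℝ] V) (hT : T ∘ₗ T = LinearMap.id)
    (hplus : finrank ℝ (LinearMap.ker (T - LinearMap.id)) = n)
    (hminus : finrank ℝ (LinearMap.ker (T + LinearMap.id)) = n)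
    (hcompat : ∀ x y, g (T x) (T y) = - g x y)
    (A : V →ₗ[ℝ] V)
    (hAT : A ∘ₗ T = T ∘ₗ A)
    (hAsym : ∀ x y, g (A x) y = g x (A y)) :
    (∃ q : Polynomial ℝ, q.natDegree = n ∧ q.leadingCoeff = (-1 : ℝ) ^ n ∧
      ∀ t : ℝ, LinearMap.det (A - t • LinearMap.id) = (q.eval t) ^ 2) ∧
    ∀ t : ℝ, 0 ≤ LinearMap.det (A - t • LinearMap.id) :=
  stmt18_general n hV g hnd T hT hplus hminus hcompat A hAT hAsym
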